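/- Proposition (even case): let n ≥ 4 be even. Then the subgroup of Equiv.Perm (Fin n → ZMod 12) generated by the cyclically consecutive contextual inversions {p i (i+1) : i ∈ Fin n} (indices taken cyclically in Fin n) is isomorphic to the semidirect product of the additive group Fin (n−2) → ZMod 12 by ZMod 2, where the nontrivial element of ZMod 2 acts by negation (a ↦ −a). -/

import Mathlib

/-- Contextual inversion `p i j` on pitch-class segments of length `n`. -/
def p {n : ℕ} (i j : Fin n) (x : Fin n → ZMod 12) : Fin n → ZMod 12 :=
  fun r => x i + x j - x r

/-- Contextual inversion `p i j` as a permutation (it is an involution). -/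
def pEquiv {n : ℕ} (i j : Fin n) : Equiv.Perm (Fin n → ZMod 12) where
  toFun := p i j
  invFun := p i j
  left_inv x := by funext r; simp only [p]; ring
  right_inv x := by funext r; simp only [p]; ring

/-- The negation automorphism `a ↦ -a` of the abelian group `Fin m → ZMod 12`,
written multiplicatively. -/
def negAut (m : ℕ) : MulAut (Multiplicative (Fin m → ZMod 12)) :=
  { toFun := fun a => a⁻¹
    invFun := fun a => a⁻¹
    left_inv := fun a => inv_inv a
    right_inv := fun a => inv_inv a
    map_mul' := fun a b => by show (a * b)⁻¹ = a⁻¹ * b⁻¹; rw [mul_inv_rev, mul_comm] }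

/-- The action of `ZMod 2` on `Fin m → ZMod 12` in which the nontrivial element
acts by negation. -/
def negHom (m : ℕ) :
    Multiplicative (ZMod 2) →* MulAut (Multiplicative (Fin m → ZMod 12)) where
  toFun g := if Multiplicative.toAdd g = 0 then 1 else negAut m
  map_one' := by simp
  map_mul' := by
    have hsq : negAut m * negAut m = 1 := by
      ext x
      simp [negAut]
    have h2 : ∀ c : ZMod 2, c = 0 ∨ c = 1 := by decide
    have hadd : (1 : ZMod 2) + 1 = 0 := by decide
    intro a b
    rcases h2 (Multiplicative.toAdd a) with ha | ha <;>
      rcases h2 (Multiplicative.toAdd b) with hb | hb <;>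
      simp [toAdd_mul, ha, hb, hadd, hsq]

/-!
Write `𝟙` for the constant vector. Each `p i j` is `x ↦ -x + (x i + x j) • 𝟙`, so the product
`p (i+1) (i+2) * p i (i+1)` is the shear `x ↦ x + (x i - x (i+2)) • 𝟙`. Shears `x ↦ x + φ x • 𝟙`
by functionals with `φ 𝟙 = 0` compose additively, and every `p i j` conjugates such a shear to its
inverse; so `(a, ε) ↦ shear (∑ aᵢ (xᵢ - xᵢ₊₂)) * (p 0 1) ^ ε` is a homomorphism from the semidirect
product. It is injective because the functionals `xᵢ - xᵢ₊₂` (`i < n - 2`) are independent and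
`p 0 1` is not a shear. Its image is the generated group: it contains `p 0 1`, each further
generator is a shear times the previous one, and for the wrap-around generator `p (n-1) 0` the
needed functional `x (n-2) - x 0` is, as `n` is even, minus the telescoping sum of the `xᵢ - xᵢ₊₂`
over even `i`.
-/

open Multiplicative

section Shear

variable {R : Type*} [CommRing R] {n : ℕ}

def skipDiff (x : Fin n → R) : Fin (n - 2) → R :=
  fun i => x ⟨i, by omega⟩ - x ⟨i + 2, by omega⟩

def shear (a : Fin (n - 2) → R) (x : Fin n → R) : Fin n → R :=
  fun r => x r + a ⬝ᵥ skipDiff x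

lemma skipDiff_add_const (x : Fin n → R) (c : R) : skipDiff (fun r => x r + c) = skipDiff x := by
  funext i; simp only [skipDiff]; ring

lemma skipDiff_const_sub (x : Fin n → R) (c : R) :
    skipDiff (fun r => c - x r) = -skipDiff x := by
  funext i; simp only [skipDiff, Pi.neg_apply]; ring

lemma skipDiff_shear (a : Fin (n - 2) → R) (x : Fin n → R) :
    skipDiff (shear a x) = skipDiff x :=
  skipDiff_add_const x _

lemma shear_shear (a b : Fin (n - 2) → R) (x : Fin n → R) :
    shear a (shear b x) = shear (a + b) x := by
  funext r
  simp only [shear, skipDiff_shear, add_dotProduct]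
  ring

lemma shear_zero (x : Fin n → R) : shear 0 x = x := by
  funext r; simp [shear]

variable (R n) in
def shearHom : Multiplicative (Fin (n - 2) → R) →* Equiv.Perm (Fin n → R) where
  toFun a :=
    { toFun := shear a.toAdd
      invFun := shear (-a.toAdd)
      left_inv x := by rw [shear_shear, neg_add_cancel, shear_zero]
      right_inv x := by rw [shear_shear, add_neg_cancel, shear_zero] }
  map_one' := Equiv.ext shear_zero
  map_mul' a b := Equiv.ext fun x => (shear_shear _ _ x).symm

@[simp] lemma shearHom_apply (a : Multiplicative (Fin (n - 2) → R)) (x : Fin n → R) :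
    shearHom R n a x = shear a.toAdd x := rfl

lemma skipDiff_indicator_eq_single (k : Fin (n - 2)) :
    skipDiff (fun r : Fin n => if r.1 % 2 = k.1 % 2 ∧ r.1 ≤ k.1 then (1 : R) else 0)
      = Pi.single k 1 := by
  funext i
  rcases eq_or_ne i k with rfl | hik
  · simp [skipDiff]
  · have : i.1 ≠ k.1 := Fin.val_ne_of_ne hik
    simp only [skipDiff, Pi.single_eq_of_ne hik]
    split_ifs <;> first | ring1 | omega

lemma shearHom_injective : Function.Injective (shearHom R n) := by
  refine (injective_iff_map_eq_one _).2 fun a ha => ?_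
  refine toAdd.injective (funext fun k => ?_)
  have hx := congrFun (Equiv.ext_iff.1 ha
    fun r : Fin n => if r.1 % 2 = k.1 % 2 ∧ r.1 ≤ k.1 then (1 : R) else 0) ⟨k, by omega⟩
  simpa [shear, skipDiff_indicator_eq_single] using hx

end Shear

section Involution

variable {G : Type*} [Group G]

lemma eq_one_or_eq_ofAdd_one (g : Multiplicative (ZMod 2)) : g = 1 ∨ g = ofAdd 1 := by
  revert g; decide

def zmodTwoHom (s : G) (hs : s * s = 1) : Multiplicative (ZMod 2) →* G :=
  AddMonoidHom.toMultiplicativeLeft <| ZMod.lift 2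
    ⟨zmultiplesHom (Additive G) (Additive.ofMul s), by
      rw [zmultiplesHom_apply, Nat.cast_ofNat, two_zsmul, ← ofMul_mul, hs, ofMul_one]⟩

lemma zmodTwoHom_ofAdd_one (s : G) (hs : s * s = 1) : zmodTwoHom s hs (ofAdd 1) = s := by
  rw [zmodTwoHom, AddMonoidHom.toMultiplicativeLeft_apply_apply, toAdd_ofAdd, ← Int.cast_one,
    ZMod.lift_coe]
  simp

end Involution

lemma negHom_ofAdd_one (m : ℕ) : negHom m (ofAdd 1) = negAut m := by
  simp [negHom]

section Inversion

variable {n : ℕ}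

lemma skipDiff_p (i j : Fin n) (x : Fin n → ZMod 12) : skipDiff (p i j x) = -skipDiff x :=
  skipDiff_const_sub x (x i + x j)

lemma pEquiv_apply (i j : Fin n) (x : Fin n → ZMod 12) : pEquiv i j x = p i j x := rfl

lemma pEquiv_mul_self (i j : Fin n) : pEquiv i j * pEquiv i j = 1 :=
  Equiv.ext (pEquiv i j).left_inv

lemma pEquiv_inv (i j : Fin n) : (pEquiv i j)⁻¹ = pEquiv i j := rfl

lemma pEquiv_mul_shearHom (i j : Fin n) (a : Fin (n - 2) → ZMod 12) :
    pEquiv i j * shearHom _ n (ofAdd a) = shearHom _ n (ofAdd (-a)) * pEquiv i j := by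
  ext x r
  simp only [Equiv.Perm.mul_apply, shearHom_apply, toAdd_ofAdd, pEquiv_apply, p, shear,
    skipDiff_p, neg_dotProduct, dotProduct_neg]
  ring

lemma shearHom_mul_pEquiv_eq {i j k l : Fin n} {b : Fin (n - 2) → ZMod 12}
    (h : ∀ x, b ⬝ᵥ skipDiff x = x i + x j - x k - x l) :
    shearHom _ n (ofAdd b) * pEquiv i j = pEquiv k l := by
  ext x r
  simp only [Equiv.Perm.mul_apply, shearHom_apply, toAdd_ofAdd, pEquiv_apply, p, shear,
    skipDiff_p, dotProduct_neg, h]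
  ring

-- A shear moves all coordinates by the same amount, while `p 0 1` moves coordinates `0` and `2`
-- of `Pi.single 2 1` by `0` and `-2`.
lemma pEquiv_ne_shearHom [NeZero n] (hn : 3 ≤ n) (b : Multiplicative (Fin (n - 2) → ZMod 12)) :
    pEquiv (0 : Fin n) 1 ≠ shearHom _ n b := by
  intro h
  set x : Fin n → ZMod 12 := Pi.single ⟨2, hn⟩ 1
  have hx0 : x 0 = 0 := Pi.single_eq_of_ne (by simp [Fin.ext_iff]) 1
  have hx2 : x ⟨2, hn⟩ = 1 := Pi.single_eq_same _ 1
  have key (r : Fin n) : x 0 + x 1 - x r = x r + b.toAdd ⬝ᵥ skipDiff x :=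
    congrFun (Equiv.ext_iff.1 h x) r
  have h2 : (2 : ZMod 12) = 0 := by
    linear_combination key 0 - key ⟨2, hn⟩ - 2 * hx2 + 2 * hx0
  exact absurd h2 (by decide)

end Inversion

section Telescoping

variable {R : Type*} [CommRing R] {n : ℕ}

lemma sum_range_two_mul_ite_even {G : Type*} [AddCommGroup G] (f : ℕ → G) (q : ℕ) :
    ∑ j ∈ Finset.range (2 * q), (if Even j then f j - f (j + 2) else 0) = f 0 - f (2 * q) := by
  induction q with
  | zero => simp
  | succ q ih =>
    rw [Nat.mul_succ, Finset.sum_range_succ, Finset.sum_range_succ, ih,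
      if_pos (even_two_mul q), if_neg (Nat.not_even_bit1 q)]
    abel

variable (R n) in
def evenIndicator : Fin (n - 2) → R := fun i => if Even i.1 then 1 else 0

lemma evenIndicator_dotProduct_skipDiff (hn : 2 ≤ n) (heven : Even n) (x : Fin n → R) :
    evenIndicator R n ⬝ᵥ skipDiff x = x ⟨0, by omega⟩ - x ⟨n - 2, by omega⟩ := by
  obtain ⟨q, hq⟩ : ∃ q, n - 2 = 2 * q := by obtain ⟨k, rfl⟩ := heven; exact ⟨k - 1, by omega⟩
  let X : ℕ → R := fun t => if h : t < n then x ⟨t, h⟩ else 0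
  have hX : ∀ (t : ℕ) (h : t < n), x ⟨t, h⟩ = X t := fun t h => by simp only [X, dif_pos h]
  calc evenIndicator R n ⬝ᵥ skipDiff x
      = ∑ j ∈ Finset.range (n - 2), (if Even j then X j - X (j + 2) else 0) := by
        rw [← Fin.sum_univ_eq_sum_range (fun j => if Even j then X j - X (j + 2) else 0)]
        refine Finset.sum_congr rfl fun i _ => ?_
        simp only [evenIndicator, skipDiff, hX, ite_mul, one_mul, zero_mul]
    _ = X 0 - X (n - 2) := by rw [hq, sum_range_two_mul_ite_even]
    _ = x ⟨0, by omega⟩ - x ⟨n - 2, by omega⟩ := by rw [hX, hX]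

end Telescoping

section Embedding

variable (n : ℕ) [NeZero n]

def reflection : Multiplicative (ZMod 2) →* Equiv.Perm (Fin n → ZMod 12) :=
  zmodTwoHom (pEquiv 0 1) (pEquiv_mul_self 0 1)

lemma shearHom_comp_negHom (g : Multiplicative (ZMod 2)) :
    (shearHom _ n).comp (negHom (n - 2) g).toMonoidHom
      = (MulAut.conj (reflection n g)).toMonoidHom.comp (shearHom _ n) := by
  refine MonoidHom.ext fun a => ?_
  rw [MonoidHom.comp_apply, MonoidHom.comp_apply, MulEquiv.coe_toMonoidHom,
    MulEquiv.coe_toMonoidHom]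
  rcases eq_one_or_eq_ofAdd_one g with rfl | rfl
  · simp
  · rw [negHom_ofAdd_one, reflection, zmodTwoHom_ofAdd_one,
      MulAut.conj_apply, ← ofAdd_toAdd a, pEquiv_mul_shearHom, mul_assoc, pEquiv_inv,
      pEquiv_mul_self, mul_one]
    rfl

def semidirectToPerm :
    Multiplicative (Fin (n - 2) → ZMod 12) ⋊[negHom (n - 2)] Multiplicative (ZMod 2)
      →* Equiv.Perm (Fin n → ZMod 12) :=
  SemidirectProduct.lift (shearHom _ n) (reflection n) (shearHom_comp_negHom n)

lemma semidirectToPerm_apply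
    (y : Multiplicative (Fin (n - 2) → ZMod 12) ⋊[negHom (n - 2)] Multiplicative (ZMod 2)) :
    semidirectToPerm n y = shearHom _ n y.left * reflection n y.right := by
  conv_lhs => rw [← SemidirectProduct.inl_left_mul_inr_right y]
  rw [map_mul, semidirectToPerm, SemidirectProduct.lift_inl, SemidirectProduct.lift_inr]

lemma semidirectToPerm_injective (hn : 3 ≤ n) : Function.Injective (semidirectToPerm n) := by
  refine (injective_iff_map_eq_one _).2 fun y hy => ?_
  rw [semidirectToPerm_apply] at hy
  rcases eq_one_or_eq_ofAdd_one y.right with hr | hr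
  · rw [hr, map_one, mul_one, ← map_one (shearHom _ n)] at hy
    exact SemidirectProduct.ext (shearHom_injective hy) hr
  · rw [hr, reflection, zmodTwoHom_ofAdd_one] at hy
    exact absurd ((eq_inv_of_mul_eq_one_right hy).trans (map_inv _ _).symm)
      (pEquiv_ne_shearHom hn _)

end Embedding

section Generation

variable {n : ℕ}

def consecutiveInversions (n : ℕ) [NeZero n] : Set (Equiv.Perm (Fin n → ZMod 12)) :=
  {g | ∃ i : Fin n, g = pEquiv i (i + 1)}

lemma shearHom_single_mul_pEquiv {t : ℕ} (ht : t + 2 < n) :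
    shearHom _ n (ofAdd (Pi.single ⟨t, by omega⟩ 1)) * pEquiv ⟨t, by omega⟩ ⟨t + 1, by omega⟩
      = pEquiv ⟨t + 1, by omega⟩ ⟨t + 2, ht⟩ :=
  shearHom_mul_pEquiv_eq fun x => by rw [single_dotProduct, one_mul, skipDiff]; ring

lemma shearHom_neg_evenIndicator_mul_pEquiv (hn : 2 ≤ n) (heven : Even n) :
    shearHom _ n (ofAdd (-evenIndicator _ n)) * pEquiv ⟨n - 2, by omega⟩ ⟨n - 1, by omega⟩
      = pEquiv ⟨n - 1, by omega⟩ ⟨0, by omega⟩ :=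
  shearHom_mul_pEquiv_eq fun x => by
    rw [neg_dotProduct, evenIndicator_dotProduct_skipDiff hn heven]; ring

variable [NeZero n]

lemma Fin.mk_add_one_of_lt {t : ℕ} (ht : t + 1 < n) :
    (⟨t, by omega⟩ : Fin n) + 1 = ⟨t + 1, ht⟩ :=
  Fin.ext (Fin.val_add_one_of_lt' ht)

lemma pEquiv_mem_closure {t : ℕ} (ht : t + 1 < n) :
    pEquiv ⟨t, by omega⟩ ⟨t + 1, ht⟩ ∈ Subgroup.closure (consecutiveInversions n) :=
  Subgroup.subset_closure ⟨_, by rw [Fin.mk_add_one_of_lt]⟩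

lemma shearHom_mem_closure (a : Multiplicative (Fin (n - 2) → ZMod 12)) :
    shearHom _ n a ∈ Subgroup.closure (consecutiveInversions n) := by
  set H := (Subgroup.closure (consecutiveInversions n)).comap (shearHom _ n)
  have hsingle (i : Fin (n - 2)) : ofAdd (Pi.single i 1) ∈ H := by
    rw [Subgroup.mem_comap,
      eq_mul_inv_of_mul_eq (shearHom_single_mul_pEquiv (t := i) (by omega)), pEquiv_inv]
    exact mul_mem (pEquiv_mem_closure _) (pEquiv_mem_closure _)
  have hsum : a.toAdd = ∑ i, (a.toAdd i).val • Pi.single i 1 := by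
    simp_rw [← Pi.single_smul, nsmul_eq_mul, mul_one, ZMod.natCast_zmod_val,
      Finset.univ_sum_single]
  change a ∈ H
  rw [← ofAdd_toAdd a, hsum, ofAdd_sum]
  exact Subgroup.prod_mem _ fun i _ => by
    rw [ofAdd_nsmul]
    exact pow_mem (hsingle i) _

lemma reflection_mem_closure (g : Multiplicative (ZMod 2)) :
    reflection n g ∈ Subgroup.closure (consecutiveInversions n) := by
  rcases eq_one_or_eq_ofAdd_one g with rfl | rfl
  · exact one_mem _
  · rw [reflection, zmodTwoHom_ofAdd_one]
    exact Subgroup.subset_closure ⟨0, by rw [zero_add]⟩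

lemma range_semidirectToPerm_le :
    (semidirectToPerm n).range ≤ Subgroup.closure (consecutiveInversions n) := by
  rintro _ ⟨y, rfl⟩
  rw [semidirectToPerm_apply]
  exact mul_mem (shearHom_mem_closure _) (reflection_mem_closure _)

lemma shearHom_mem_range (a : Multiplicative (Fin (n - 2) → ZMod 12)) :
    shearHom _ n a ∈ (semidirectToPerm n).range :=
  ⟨.inl a, SemidirectProduct.lift_inl _ _ _ a⟩

lemma pEquiv_mem_range : ∀ (t : ℕ) (ht : t + 1 < n),
    pEquiv ⟨t, by omega⟩ ⟨t + 1, ht⟩ ∈ (semidirectToPerm n).range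
  | 0, ht => ⟨.inr (ofAdd 1), by
      rw [semidirectToPerm, SemidirectProduct.lift_inr, reflection, zmodTwoHom_ofAdd_one,
        ← Fin.mk_add_one_of_lt ht, show (⟨0, _⟩ : Fin n) = 0 from Fin.ext (by simp), zero_add]⟩
  | t + 1, ht => by
    rw [← shearHom_single_mul_pEquiv ht]
    exact mul_mem (shearHom_mem_range _) (pEquiv_mem_range t (by omega))

lemma closure_le_range_semidirectToPerm (hn : 2 ≤ n) (heven : Even n) :
    Subgroup.closure (consecutiveInversions n) ≤ (semidirectToPerm n).range := by
  rw [Subgroup.closure_le]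
  rintro _ ⟨⟨t, ht⟩, rfl⟩
  by_cases hlt : t + 1 < n
  · rw [Fin.mk_add_one_of_lt hlt]
    exact pEquiv_mem_range t hlt
  · obtain rfl : t = n - 1 := by omega
    have hwrap : (⟨n - 1, ht⟩ : Fin n) + 1 = ⟨0, by omega⟩ := by
      ext; rw [Fin.val_add]; simp [Nat.sub_add_cancel (NeZero.one_le)]
    have hprev : (⟨n - 2 + 1, by omega⟩ : Fin n) = ⟨n - 1, by omega⟩ :=
      Fin.ext (show n - 2 + 1 = n - 1 by omega)
    rw [hwrap, ← shearHom_neg_evenIndicator_mul_pEquiv hn heven, ← hprev]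
    exact mul_mem (shearHom_mem_range _) (pEquiv_mem_range (n - 2) (by omega))

lemma range_semidirectToPerm (hn : 2 ≤ n) (heven : Even n) :
    (semidirectToPerm n).range = Subgroup.closure (consecutiveInversions n) :=
  le_antisymm range_semidirectToPerm_le (closure_le_range_semidirectToPerm hn heven)

end Generation

theorem stmt13 (n : ℕ) [NeZero n] (hn : 4 ≤ n) (heven : Even n) :
    Nonempty ((Subgroup.closure
        {g : Equiv.Perm (Fin n → ZMod 12) | ∃ i : Fin n, g = pEquiv i (i + 1)}) ≃*
      (Multiplicative (Fin (n - 2) → ZMod 12)) ⋊[negHom (n - 2)]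
        Multiplicative (ZMod 2)) :=
  ⟨(MulEquiv.subgroupCongr (range_semidirectToPerm (by omega) heven).symm).trans
    (MonoidHom.ofInjective (semidirectToPerm_injective n (by omega))).symm⟩
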